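/- Let λ be a finite Borel measure on ℝ^{2n}, let J : ℝ^{2n} → ℝ^{2n} be J(x,y) = (−y,x), and let 𝓕 be the Fourier transform on L²(ℝⁿ). Then W(λ) = 𝓕⁻¹ W(J_*λ) 𝓕, where J_*λ is the pushforward of λ by J. -/

import Mathlib

/- STATEMENT 14:
Let λ be a finite Borel measure on ℝ^{2n}, let J : ℝ^{2n} → ℝ^{2n} be
J(x,y) = (−y,x), and let 𝓕 be the (unitary) Fourier transform on L²(ℝⁿ).
Then W(λ) = 𝓕⁻¹ W(J_*λ) 𝓕, where J_*λ is the pushforward of λ by J.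

W(λ) and W(J_*λ) are the bounded operators given by the Weyl-transform formula
(W(μ)φ)(t) = ∫ e^{πi(x·y+2y·t)} φ(t+x) dμ(x,y); 𝓕 is the unitary Fourier
transform, characterized on integrable L² functions by its integral formula
𝓕φ(ξ) = ∫ e^{-2πi ξ·t} φ(t) dt. -/

open MeasureTheory Complex

noncomputable section

abbrev En (n : ℕ) : Type := EuclideanSpace ℝ (Fin n)

abbrev L2 (n : ℕ) := Lp ℂ 2 (volume : Measure (En n))

open scoped Real RealInnerProductSpace FourierTransform

/-! For integrable `φ` everything is an absolutely convergent integral. By Fubini, the Fourier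
transform of `W(λ)φ` at `ξ` is the `λ`-integral over `(x, y)` of the Fourier integral of
`t ↦ e^{πi(x·y + 2y·t)} φ(t + x)`; the substitution `s = t + x` turns the latter into
`e^{πi(-y·x + 2x·ξ)} (𝓕φ)(ξ - y)`, which is the Weyl integrand of `J_*λ` applied to `𝓕φ`.
So `𝓕 ∘ W(λ) = W(J_*λ) ∘ 𝓕` on the dense subspace of integrable elements of `L²`, hence
everywhere by continuity. -/

theorem MeasureTheory.measurePreserving_prod_shear {X G : Type*} [MeasurableSpace X]
    [MeasurableSpace G] [AddGroup G] [MeasurableAdd₂ G] (μ : Measure X) (ν : Measure G)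
    [SFinite μ] [SFinite ν] [ν.IsAddRightInvariant] {a : X → G} (ha : Measurable a) :
    MeasurePreserving (fun p : X × G => (p.1, p.2 + a p.1)) (μ.prod ν) (μ.prod ν) :=
  (MeasurePreserving.id μ).skew_product (by fun_prop)
    (ae_of_all _ fun x => map_add_right_eq_self ν (a x))

theorem MeasureTheory.Lp.eq_of_forall_integrable {α E X : Type*} [MeasurableSpace α]
    {μ : Measure α} [NormedAddCommGroup E] {p : ENNReal} [Fact (1 ≤ p)] (hp : p ≠ ⊤)
    [TopologicalSpace X] [T2Space X] {g h : Lp E p μ → X} (hg : Continuous g)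
    (hh : Continuous h) (heq : ∀ f : Lp E p μ, Integrable f μ → g f = h f) : g = h := by
  funext f
  refine (Lp.simpleFunc.denseRange hp).induction_on f (isClosed_eq hg hh) fun s => heq _ ?_
  have hp0 : p ≠ 0 := (zero_lt_one.trans_le Fact.out).ne'
  exact ((SimpleFunc.memLp_iff_integrable hp0 hp).mp (Lp.simpleFunc.memLp s)).congr
    (Lp.simpleFunc.toSimpleFunc_eq_toFun s)

variable {V : Type*} [NormedAddCommGroup V] [InnerProductSpace ℝ V]

def weylPhase (z : V × V) (t : V) : ℂ :=
  exp (π * I * ((⟪z.1, z.2⟫ : ℂ) + 2 * (⟪z.2, t⟫ : ℂ)))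

theorem norm_weylPhase (z : V × V) (t : V) : ‖weylPhase z t‖ = 1 := by
  rw [weylPhase, norm_exp]
  simp

theorem continuous_weylPhase : Continuous fun p : (V × V) × V => weylPhase p.1 p.2 := by
  unfold weylPhase
  fun_prop

theorem exp_inner_mul_weylPhase (ξ t : V) (z : V × V) :
    exp (-(2 * π * I * (⟪ξ, t⟫ : ℂ))) * weylPhase z t =
      weylPhase (-z.2, z.1) ξ * exp (-(2 * π * I * (⟪ξ - z.2, t + z.1⟫ : ℂ))) := by
  simp only [weylPhase, ← exp_add, inner_sub_left, inner_add_right, inner_neg_left,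
    real_inner_comm z.1 ξ, real_inner_comm z.2 z.1]
  push_cast
  ring_nf

variable [FiniteDimensional ℝ V] [MeasurableSpace V] [BorelSpace V]

theorem fourier_eq_integral_exp (f : V → ℂ) (ξ : V) :
    𝓕 f ξ = ∫ t, exp (-(2 * π * I * (⟪ξ, t⟫ : ℂ))) * f t := by
  rw [Real.fourier_eq']
  congr 1 with t
  rw [smul_eq_mul, real_inner_comm]
  push_cast
  ring_nf

def weylTransform (μ : Measure (V × V)) (f : V → ℂ) (t : V) : ℂ :=
  ∫ z, weylPhase z t * f (t + z.1) ∂μ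

def symplecticJ : (V × V) ≃ᵐ (V × V) where
  toFun w := (-w.2, w.1)
  invFun w := (w.2, -w.1)
  left_inv w := by simp
  right_inv w := by simp
  measurable_toFun := measurable_snd.neg.prodMk measurable_fst
  measurable_invFun := measurable_snd.prodMk measurable_fst.neg

theorem integral_exp_inner_mul_weylPhase (f : V → ℂ) (ξ : V) (z : V × V) :
    ∫ t, exp (-(2 * π * I * (⟪ξ, t⟫ : ℂ))) * (weylPhase z t * f (t + z.1)) =
      weylPhase (-z.2, z.1) ξ * 𝓕 f (ξ - z.2) := by
  calc ∫ t, exp (-(2 * π * I * (⟪ξ, t⟫ : ℂ))) * (weylPhase z t * f (t + z.1))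
      = ∫ t, weylPhase (-z.2, z.1) ξ *
          (exp (-(2 * π * I * (⟪ξ - z.2, t + z.1⟫ : ℂ))) * f (t + z.1)) := by
        congr 1 with t
        rw [← mul_assoc, exp_inner_mul_weylPhase, mul_assoc]
    _ = weylPhase (-z.2, z.1) ξ * 𝓕 f (ξ - z.2) := by
        rw [integral_const_mul, fourier_eq_integral_exp,
          integral_add_right_eq_self (fun s => exp (-(2 * π * I * (⟪ξ - z.2, s⟫ : ℂ))) * f s)]

variable (μ : Measure (V × V)) [IsFiniteMeasure μ]

theorem integrable_weylIntegrand {f : V → ℂ} (hf : Integrable f) :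
    Integrable (fun p : (V × V) × V => weylPhase p.1 p.2 * f (p.2 + p.1.1)) (μ.prod volume) := by
  have hshift : Integrable (fun p : (V × V) × V => f (p.2 + p.1.1)) (μ.prod volume) :=
    (measurePreserving_prod_shear μ volume measurable_fst).integrable_comp_of_integrable
      (hf.comp_snd μ)
  exact hshift.bdd_mul continuous_weylPhase.aestronglyMeasurable
    (ae_of_all _ fun p => (norm_weylPhase p.1 p.2).le)

theorem integrable_weylTransform {f : V → ℂ} (hf : Integrable f) :
    Integrable (weylTransform μ f) :=
  (integrable_weylIntegrand μ hf).integral_prod_right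

theorem weylTransform_congr_ae {f g : V → ℂ} (hfg : f =ᵐ[volume] g) :
    weylTransform μ f =ᵐ[volume] weylTransform μ g := by
  have hshift : Measure.QuasiMeasurePreserving (fun p : V × (V × V) => p.1 + p.2.1)
      (volume.prod μ) volume :=
    (Measure.quasiMeasurePreserving_snd.comp
      (measurePreserving_prod_shear μ volume measurable_fst).quasiMeasurePreserving).comp
        Measure.measurePreserving_swap.quasiMeasurePreserving
  filter_upwards [Measure.ae_ae_of_ae_prod (hshift.ae_eq hfg)] with t ht
  exact integral_congr_ae (ht.mono fun z hz => congrArg (weylPhase z t * ·) hz)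

theorem fourier_weylTransform {f : V → ℂ} (hf : Integrable f) :
    𝓕 (weylTransform μ f) = weylTransform (μ.map fun w : V × V => (-w.2, w.1)) (𝓕 f) := by
  ext ξ
  have hint : Integrable (fun p : (V × V) × V =>
      exp (-(2 * π * I * (⟪ξ, p.2⟫ : ℂ))) * (weylPhase p.1 p.2 * f (p.2 + p.1.1)))
      (μ.prod volume) :=
    (integrable_weylIntegrand μ hf).bdd_mul (c := 1) (by fun_prop) (ae_of_all _ fun p => by
      rw [norm_exp]; simp)
  calc 𝓕 (weylTransform μ f) ξ
      = ∫ t, ∫ z, exp (-(2 * π * I * (⟪ξ, t⟫ : ℂ))) * (weylPhase z t * f (t + z.1)) ∂μ := by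
        simp only [fourier_eq_integral_exp, weylTransform, integral_const_mul]
    _ = ∫ z, weylPhase (-z.2, z.1) ξ * 𝓕 f (ξ - z.2) ∂μ := by
        rw [← integral_integral_swap (f := fun z t => exp (-(2 * π * I * (⟪ξ, t⟫ : ℂ))) *
          (weylPhase z t * f (t + z.1))) hint]
        simp only [integral_exp_inner_mul_weylPhase]
    _ = weylTransform (μ.map symplecticJ) (𝓕 f) ξ := by
        rw [weylTransform, integral_map_equiv]
        simp [symplecticJ, sub_eq_add_neg]

theorem statement14 (n : ℕ)
    (lam : Measure (En n × En n)) [IsFiniteMeasure lam]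
    (F : L2 n ≃ₗᵢ[ℂ] L2 n)
    (hF : ∀ φ : L2 n, Integrable (φ : En n → ℂ) (volume : Measure (En n)) →
      ∀ᵐ ξ ∂(volume : Measure (En n)),
        (F φ : En n → ℂ) ξ =
          ∫ t : En n,
            Complex.exp (-(2 * (Real.pi : ℂ) * Complex.I *
              ((@inner ℝ _ _ ξ t : ℝ) : ℂ))) * (φ : En n → ℂ) t)
    (T : L2 n →L[ℂ] L2 n)
    (hT : ∀ φ : L2 n, ∀ᵐ t ∂(volume : Measure (En n)),
      (T φ : En n → ℂ) t =
        ∫ z : En n × En n,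
          Complex.exp ((Real.pi : ℂ) * Complex.I *
              (((@inner ℝ _ _ z.1 z.2 : ℝ) : ℂ) + 2 * ((@inner ℝ _ _ z.2 t : ℝ) : ℂ)))
            * (φ : En n → ℂ) (t + z.1) ∂lam)
    (T' : L2 n →L[ℂ] L2 n)
    (hT' : ∀ φ : L2 n, ∀ᵐ t ∂(volume : Measure (En n)),
      (T' φ : En n → ℂ) t =
        ∫ z : En n × En n,
          Complex.exp ((Real.pi : ℂ) * Complex.I *
              (((@inner ℝ _ _ z.1 z.2 : ℝ) : ℂ) + 2 * ((@inner ℝ _ _ z.2 t : ℝ) : ℂ)))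
            * (φ : En n → ℂ) (t + z.1)
          ∂(Measure.map (fun w : En n × En n => (-w.2, w.1)) lam)) :
    ∀ φ : L2 n, T φ = F.symm (T' (F φ)) := by
  have hFourier : ∀ ψ : L2 n, Integrable (ψ : En n → ℂ) →
      (F ψ : En n → ℂ) =ᵐ[volume] 𝓕 (ψ : En n → ℂ) :=
    fun ψ hψ => (hF ψ hψ).mono fun ξ hξ => hξ.trans (fourier_eq_integral_exp _ ξ).symm
  have hcomm : ∀ ψ : L2 n, Integrable (ψ : En n → ℂ) → F (T ψ) = T' (F ψ) := by
    intro ψ hψ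
    have hTψ : (T ψ : En n → ℂ) =ᵐ[volume] weylTransform lam ψ := hT ψ
    apply Lp.ext
    calc (F (T ψ) : En n → ℂ)
        =ᵐ[volume] 𝓕 (T ψ : En n → ℂ) :=
          hFourier _ ((integrable_weylTransform lam hψ).congr hTψ.symm)
      _ = 𝓕 (weylTransform lam ψ) := funext (Real.fourier_congr_ae hTψ)
      _ = weylTransform (lam.map fun w : En n × En n => (-w.2, w.1)) (𝓕 (ψ : En n → ℂ)) :=
          fourier_weylTransform lam hψ
      _ =ᵐ[volume] weylTransform (lam.map fun w : En n × En n => (-w.2, w.1)) (F ψ) :=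
          weylTransform_congr_ae _ (hFourier ψ hψ).symm
      _ =ᵐ[volume] (T' (F ψ) : En n → ℂ) := Filter.EventuallyEq.symm (hT' (F ψ))
  have hcomm_all : (fun ψ => F (T ψ)) = fun ψ => T' (F ψ) :=
    Lp.eq_of_forall_integrable ENNReal.ofNat_ne_top (by fun_prop) (by fun_prop) hcomm
  intro φ
  rw [← congrFun hcomm_all φ, LinearIsometryEquiv.symm_apply_apply]

end
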